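/- Let Q be a probability measure on (0,∞), P_d = P_d(Q), and let K_d be the pCN transition kernel for target density p_d. Then for every p ∈ ℕ and every compact set K ⊂ (0,∞)∖{1}, d^p · ∫_{ℝ^d} 1{‖x‖²/d ∈ K} · K_d(x, ℝ^d∖{x}) P_d(dx) → 0 as d → ∞. (In terms of the stationary pCN chain {X_m^d}, this says d^p·ℙ(‖X_0^d‖²/d ∈ K and X_0^d ≠ X_1^d) → 0.) -/

import Mathlib

/-!
`P_d` is stationary for `K_d`, so the probability of leaving `A = {x : ‖x‖²/d ∈ K}` in one step
is at most `∫_A ∫ min(p(x) φ_x(y), p(y) φ_y(x)) dy dx`, where `φ_x` is the proposal density.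
Under `φ_x`, `‖y‖²` concentrates around `ρ‖x‖² + (1-ρ)d` with exponentially small (Chernoff)
tails. For `x ∈ A`, `‖x‖²` stays at distance of order `d` from `d`, and then no pair `(x, y)` is
typical both for the move `x → y` and for the reverse move `y → x`. Bounding the minimum by the
atypical side gives `O(e^{-cd})`, which beats every power of `d`.
-/

open MeasureTheory ENNReal Filter Topology

noncomputable section

/-- The state space in dimension `d`: `d`-dimensional Euclidean space. -/
abbrev Euc (d : ℕ) : Type := EuclideanSpace ℝ (Fin d)

/-- The pCN proposal density: the density of `N_d(√ρ · x, (1-ρ) I_d)` at `y`. -/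
def pcnPropDen (ρ : ℝ) (d : ℕ) (x y : Euc d) : ℝ :=
  (2 * Real.pi * (1 - ρ)) ^ (-(d : ℝ) / 2) *
    Real.exp (-‖y - Real.sqrt ρ • x‖ ^ 2 / (2 * (1 - ρ)))

/-- The pCN acceptance probability for target density `p`. -/
def pcnAccept (d : ℕ) (p : Euc d → ℝ) (x y : Euc d) : ℝ :=
  min 1 ((p y * Real.exp (-‖x‖ ^ 2 / 2)) / (p x * Real.exp (-‖y‖ ^ 2 / 2)))

/-- The pCN transition kernel for target density `p`, as a measure-valued map. -/
def pcnKernel (ρ : ℝ) (d : ℕ) (p : Euc d → ℝ) (x : Euc d) : Measure (Euc d) :=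
  volume.withDensity (fun y => ENNReal.ofReal (pcnAccept d p x y * pcnPropDen ρ d x y)) +
    (1 - ∫⁻ y, ENNReal.ofReal (pcnAccept d p x y * pcnPropDen ρ d x y)) • Measure.dirac x

/-- The density of the scale mixture of Gaussians `P_d(Q)`:
`p_d(x) = ∫₀^∞ (2πz)^{-d/2} exp(-‖x‖²/(2z)) Q(dz)`. -/
def mixDensity (Q : Measure ℝ) (d : ℕ) (x : Euc d) : ℝ :=
  ∫ z in Set.Ioi (0 : ℝ), (2 * Real.pi * z) ^ (-(d : ℝ) / 2) * Real.exp (-‖x‖ ^ 2 / (2 * z)) ∂Q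

/-- The scale mixture of Gaussians `P_d(Q)` on `ℝ^d` with mixing distribution `Q`. -/
def PdQ (Q : Measure ℝ) (d : ℕ) : Measure (Euc d) :=
  volume.withDensity fun x => ENNReal.ofReal (mixDensity Q d x)

/-- The density of `N_d(0, σ² I_d)`. -/
def gaussDensity (σ : ℝ) (d : ℕ) (x : Euc d) : ℝ :=
  (2 * Real.pi * σ ^ 2) ^ (-(d : ℝ) / 2) * Real.exp (-‖x‖ ^ 2 / (2 * σ ^ 2))

open Real
open scoped RealInnerProductSpace

section Gaussian

variable {d : ℕ}

lemma ofReal_neg_mul_sq_norm_add_inner (a c : ℝ) (w v : Euc d) :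
    -(a : ℂ) * (‖v‖ : ℂ) ^ 2 + (c : ℂ) * (⟪w, v⟫ : ℝ) = ((-a * ‖v‖ ^ 2 + c * ⟪w, v⟫ : ℝ) : ℂ) := by
  push_cast; ring

lemma integrable_exp_neg_mul_sq_norm_add_inner {a : ℝ} (ha : 0 < a) (c : ℝ) (w : Euc d) :
    Integrable fun v : Euc d => rexp (-a * ‖v‖ ^ 2 + c * ⟪w, v⟫) := by
  have h := (GaussianFourier.integrable_cexp_neg_mul_sq_norm_add (V := Euc d)
    (b := (a : ℂ)) (by simpa using ha) (c : ℂ) w).norm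
  convert h using 2 with v
  rw [ofReal_neg_mul_sq_norm_add_inner, ← Complex.ofReal_exp, Complex.norm_real,
    Real.norm_of_nonneg (exp_pos _).le]

lemma integral_exp_neg_mul_sq_norm_add_inner {a : ℝ} (ha : 0 < a) (c : ℝ) (w : Euc d) :
    ∫ v : Euc d, rexp (-a * ‖v‖ ^ 2 + c * ⟪w, v⟫)
      = (π / a) ^ ((d : ℝ) / 2) * rexp (c ^ 2 * ‖w‖ ^ 2 / (4 * a)) := by
  have h := GaussianFourier.integral_cexp_neg_mul_sq_norm_add (V := Euc d)
    (b := (a : ℂ)) (by simpa using ha) (c : ℂ) w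
  simp_rw [ofReal_neg_mul_sq_norm_add_inner, ← Complex.ofReal_exp, integral_complex_ofReal,
    finrank_euclideanSpace_fin] at h
  rw [← Complex.ofReal_inj, h, Complex.ofReal_mul, Complex.ofReal_exp,
    Complex.ofReal_cpow (by positivity : (0 : ℝ) ≤ π / a)]
  push_cast
  ring_nf

lemma lintegral_exp_mul_sq_norm_mul_gaussian {v t : ℝ} (hv : 0 < v) (ht : 2 * t * v < 1)
    (m : Euc d) :
    ∫⁻ y : Euc d, ENNReal.ofReal (rexp (t * ‖y‖ ^ 2) *
        ((2 * π * v) ^ (-(d : ℝ) / 2) * rexp (-‖y - m‖ ^ 2 / (2 * v))))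
      = ENNReal.ofReal ((1 - 2 * t * v) ^ (-(d : ℝ) / 2) *
          rexp (t * ‖m‖ ^ 2 / (1 - 2 * t * v))) := by
  set a := 1 / (2 * v) - t
  have h2va : 2 * v * a = 1 - 2 * t * v := by simp only [a]; field_simp
  have ha : 0 < a := by nlinarith
  have hC : 0 ≤ (2 * π * v) ^ (-(d : ℝ) / 2) * rexp (-‖m‖ ^ 2 / (2 * v)) := by positivity
  have complete_square : ∀ y : Euc d,
      rexp (t * ‖y‖ ^ 2) * ((2 * π * v) ^ (-(d : ℝ) / 2) * rexp (-‖y - m‖ ^ 2 / (2 * v)))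
        = (2 * π * v) ^ (-(d : ℝ) / 2) * rexp (-‖m‖ ^ 2 / (2 * v)) *
          rexp (-a * ‖y‖ ^ 2 + (1 / v) * ⟪m, y⟫) := by
    intro y
    rw [mul_left_comm, mul_assoc, ← exp_add, mul_assoc, ← exp_add, norm_sub_sq_real,
      real_inner_comm]
    congr 2
    simp only [a]
    field_simp
    ring
  simp_rw [complete_square, ENNReal.ofReal_mul hC]
  rw [lintegral_const_mul' _ _ ENNReal.ofReal_ne_top,
    ← ofReal_integral_eq_lintegral_ofReal (integrable_exp_neg_mul_sq_norm_add_inner ha _ m)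
      (ae_of_all _ fun y => (exp_pos _).le),
    integral_exp_neg_mul_sq_norm_add_inner ha, ← ENNReal.ofReal_mul hC]
  congr 1
  have hpow : (2 * π * v) ^ (-(d : ℝ) / 2) * (π / a) ^ ((d : ℝ) / 2)
      = (1 - 2 * t * v) ^ (-(d : ℝ) / 2) := by
    rw [← h2va, neg_div, rpow_neg (by positivity), rpow_neg (by positivity), inv_mul_eq_div,
      ← div_rpow (by positivity) (by positivity), ← inv_rpow (by positivity)]
    congr 1
    field_simp
  have hexp : rexp (-‖m‖ ^ 2 / (2 * v)) * rexp ((1 / v) ^ 2 * ‖m‖ ^ 2 / (4 * a))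
      = rexp (t * ‖m‖ ^ 2 / (1 - 2 * t * v)) := by
    rw [← exp_add]
    congr 1
    rw [← h2va]
    field_simp
    linear_combination (-2 * ‖m‖ ^ 2) * h2va
  calc _ = (2 * π * v) ^ (-(d : ℝ) / 2) * (π / a) ^ ((d : ℝ) / 2) *
        (rexp (-‖m‖ ^ 2 / (2 * v)) * rexp ((1 / v) ^ 2 * ‖m‖ ^ 2 / (4 * a))) := by ring
    _ = _ := by rw [hpow, hexp]

end Gaussian

section Mixture

variable {d : ℕ}

lemma lintegral_ofReal_gaussian_eq_one {z : ℝ} (hz : 0 < z) :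
    ∫⁻ x : Euc d, ENNReal.ofReal ((2 * π * z) ^ (-(d : ℝ) / 2) * rexp (-‖x‖ ^ 2 / (2 * z)))
      = 1 := by
  simpa using lintegral_exp_mul_sq_norm_mul_gaussian (d := d) hz (t := 0) (by simp) 0

lemma measurable_mixDensity (Q : Measure ℝ) [SFinite Q] : Measurable (mixDensity Q d) :=
  (Measurable.stronglyMeasurable (by fun_prop)).integral_prod_right'
    (f := fun q : Euc d × ℝ => (2 * π * q.2) ^ (-(d : ℝ) / 2) * rexp (-‖q.1‖ ^ 2 / (2 * q.2)))
    |>.measurable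

lemma mixDensity_nonneg (Q : Measure ℝ) (x : Euc d) : 0 ≤ mixDensity Q d x :=
  setIntegral_nonneg measurableSet_Ioi fun z (hz : 0 < z) => by positivity

lemma lintegral_ofReal_mixDensity_le_one (Q : Measure ℝ) [IsProbabilityMeasure Q] :
    ∫⁻ x : Euc d, ENNReal.ofReal (mixDensity Q d x) ≤ 1 := by
  set φ : Euc d → ℝ → ℝ := fun x z => (2 * π * z) ^ (-(d : ℝ) / 2) * rexp (-‖x‖ ^ 2 / (2 * z))
  have hφ : Measurable (Function.uncurry φ) := by simp only [φ]; fun_prop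
  calc ∫⁻ x, ENNReal.ofReal (mixDensity Q d x)
      ≤ ∫⁻ x, ∫⁻ z in Set.Ioi 0, ENNReal.ofReal (φ x z) ∂Q := by
        refine lintegral_mono fun x => (ofReal_le_enorm _).trans
          ((enorm_integral_le_lintegral_enorm _).trans_eq ?_)
        refine setLIntegral_congr_fun measurableSet_Ioi fun z (hz : 0 < z) => ?_
        exact Real.enorm_of_nonneg (by positivity)
    _ = ∫⁻ z in Set.Ioi 0, (∫⁻ x, ENNReal.ofReal (φ x z)) ∂Q :=
        lintegral_lintegral_swap hφ.ennreal_ofReal.aemeasurable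
    _ = Q (Set.Ioi 0) := by
        rw [← setLIntegral_one]
        exact setLIntegral_congr_fun measurableSet_Ioi fun z hz =>
          lintegral_ofReal_gaussian_eq_one (Set.mem_Ioi.mp hz)
    _ ≤ 1 := prob_le_one

end Mixture

lemma setLIntegral_lintegral_min_le_two_mul {α : Type*} [MeasurableSpace α] {μ : Measure α}
    [SFinite μ] {f : α → α → ℝ≥0∞} (hf : Measurable (Function.uncurry f)) {S : Set (α × α)}
    (hS : MeasurableSet S) {A : Set α} (hA : MeasurableSet A)
    (hcover : ∀ x ∈ A, ∀ y, (x, y) ∈ S ∨ (y, x) ∈ S) :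
    ∫⁻ x in A, ∫⁻ y, min (f x y) (f y x) ∂μ ∂μ
      ≤ 2 * ∫⁻ x, ∫⁻ y in {y | (x, y) ∈ S}, f x y ∂μ ∂μ := by
  set g := S.indicator (Function.uncurry f)
  have hg : Measurable g := hf.indicator hS
  have hsection : ∀ x, ∫⁻ y, g (x, y) ∂μ = ∫⁻ y in {y | (x, y) ∈ S}, f x y ∂μ := fun x =>
    lintegral_indicator (measurable_prodMk_left hS) (f x)
  have hmin : ∀ x ∈ A, ∀ y, min (f x y) (f y x) ≤ g (x, y) + g (y, x) := by
    intro x hx y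
    rcases hcover x hx y with h | h
    · exact (min_le_left _ _).trans (le_add_right (Set.indicator_of_mem h (Function.uncurry f)).ge)
    · exact (min_le_right _ _).trans (le_add_left (Set.indicator_of_mem h (Function.uncurry f)).ge)
  calc ∫⁻ x in A, ∫⁻ y, min (f x y) (f y x) ∂μ ∂μ
      ≤ ∫⁻ x, ∫⁻ y, g (x, y) + g (y, x) ∂μ ∂μ :=
        (setLIntegral_mono' hA fun x hx => lintegral_mono (hmin x hx)).trans
          (setLIntegral_le_lintegral _ _)
    _ = (∫⁻ x, ∫⁻ y, g (x, y) ∂μ ∂μ) + ∫⁻ x, ∫⁻ y, g (y, x) ∂μ ∂μ := by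
        rw [← lintegral_add_left hg.lintegral_prod_right']
        exact lintegral_congr fun x => lintegral_add_left (hg.comp measurable_prodMk_left) _
    _ = 2 * ∫⁻ x, ∫⁻ y, g (x, y) ∂μ ∂μ := by
        rw [lintegral_lintegral_swap (f := fun x y => g (y, x))
          (hg.comp measurable_swap).aemeasurable, two_mul]
    _ = _ := by simp_rw [hsection]

section Proposal

variable {ρ : ℝ} {d : ℕ}

lemma pcnPropDen_nonneg (hρ : ρ < 1) (x y : Euc d) : 0 ≤ pcnPropDen ρ d x y := by
  have : 0 < 1 - ρ := by linarith
  unfold pcnPropDen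
  positivity

lemma continuous_pcnPropDen : Continuous fun q : Euc d × Euc d => pcnPropDen ρ d q.1 q.2 := by
  unfold pcnPropDen
  fun_prop

lemma lintegral_exp_mul_sq_norm_mul_pcnPropDen (hρ : ρ ∈ Set.Ico 0 1) {t : ℝ}
    (ht : 2 * t * (1 - ρ) < 1) (x : Euc d) :
    ∫⁻ y, ENNReal.ofReal (rexp (t * ‖y‖ ^ 2) * pcnPropDen ρ d x y)
      = ENNReal.ofReal ((1 - 2 * t * (1 - ρ)) ^ (-(d : ℝ) / 2) *
          rexp (t * (ρ * ‖x‖ ^ 2) / (1 - 2 * t * (1 - ρ)))) := by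
  have hnorm : ‖√ρ • x‖ ^ 2 = ρ * ‖x‖ ^ 2 := by
    rw [norm_smul, mul_pow, Real.norm_of_nonneg (sqrt_nonneg ρ), sq_sqrt hρ.1]
  rw [← hnorm]
  exact lintegral_exp_mul_sq_norm_mul_gaussian (by linarith [hρ.2]) ht _

lemma neg_log_one_sub_sub_le_two_mul_sq {u : ℝ} (hu : u ≤ 1 / 2) :
    -Real.log (1 - u) - u ≤ 2 * u ^ 2 := by
  have h1u : 0 < 1 - u := by linarith
  have hlog := one_sub_inv_le_log_of_pos h1u
  have hinv : (1 - u)⁻¹ ≤ 1 + u + 2 * u ^ 2 := by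
    rw [inv_le_iff_one_le_mul₀ h1u]
    nlinarith [sq_nonneg u]
  linarith

lemma lintegral_exp_mul_sub_mean_mul_pcnPropDen_le (hρ : ρ ∈ Set.Ico 0 1) {t R : ℝ}
    (ht : 2 * t * (1 - ρ) ≤ 1 / 2) {x : Euc d} (hx : ‖x‖ ^ 2 ≤ R * d) :
    ∫⁻ y, ENNReal.ofReal (rexp (t * (‖y‖ ^ 2 - (ρ * ‖x‖ ^ 2 + (1 - ρ) * d))) * pcnPropDen ρ d x y)
      ≤ ENNReal.ofReal (rexp (4 * (1 - ρ) * (1 - ρ + ρ * R) * t ^ 2 * d)) := by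
  obtain ⟨hρ0, hρ1⟩ := hρ
  set u := 2 * t * (1 - ρ)
  set m := ρ * ‖x‖ ^ 2
  have h1u : 0 < 1 - u := by linarith
  have hm : 0 ≤ m := by positivity
  have hsplit : ∀ y : Euc d,
      ENNReal.ofReal (rexp (t * (‖y‖ ^ 2 - (m + (1 - ρ) * d))) * pcnPropDen ρ d x y)
        = ENNReal.ofReal (rexp (-(t * (m + (1 - ρ) * d)))) *
          ENNReal.ofReal (rexp (t * ‖y‖ ^ 2) * pcnPropDen ρ d x y) := by
    intro y
    rw [← ENNReal.ofReal_mul (exp_pos _).le, ← mul_assoc, ← exp_add]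
    ring_nf
  rw [lintegral_congr hsplit, lintegral_const_mul' _ _ ENNReal.ofReal_ne_top,
    lintegral_exp_mul_sq_norm_mul_pcnPropDen ⟨hρ0, hρ1⟩ (by linarith),
    ← ENNReal.ofReal_mul (exp_pos _).le, rpow_def_of_pos h1u, ← exp_add, ← exp_add]
  refine ENNReal.ofReal_le_ofReal (exp_le_exp.mpr ?_)
  have hlog := neg_log_one_sub_sub_le_two_mul_sq ht
  have hdrift : t * m / (1 - u) - t * m ≤ 4 * t ^ 2 * (1 - ρ) * m := by
    rw [sub_le_iff_le_add, div_le_iff₀ h1u]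
    nlinarith [mul_nonneg (mul_nonneg (sq_nonneg t) (by linarith : (0 : ℝ) ≤ 1 - ρ)) hm]
  have hmR : 4 * t ^ 2 * (1 - ρ) * m ≤ 4 * t ^ 2 * (1 - ρ) * (ρ * (R * d)) :=
    mul_le_mul_of_nonneg_left (mul_le_mul_of_nonneg_left hx hρ0) (by nlinarith [sq_nonneg t])
  have hd : (0 : ℝ) ≤ d := d.cast_nonneg
  nlinarith [mul_le_mul_of_nonneg_left hlog hd]

end Proposal

/-- `ρ ‖x‖² + (1 - ρ) d` is the mean of `‖y‖²` under the proposal from `x`. -/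
def pcnOffShell (ρ ε R : ℝ) (d : ℕ) : Set (Euc d × Euc d) :=
  {q | ‖q.1‖ ^ 2 ≤ R * d ∧ ε * d ≤ |‖q.2‖ ^ 2 - (ρ * ‖q.1‖ ^ 2 + (1 - ρ) * d)|}

section OffShell

variable {ρ ε R : ℝ} {d : ℕ}

lemma measurableSet_pcnOffShell : MeasurableSet (pcnOffShell ρ ε R d) := by
  refine (measurableSet_le (α := ℝ) ?_ ?_).inter (measurableSet_le (α := ℝ) ?_ ?_) <;> fun_prop

lemma setLIntegral_pcnOffShell_le (hρ : ρ ∈ Set.Ico 0 1) {t : ℝ} (ht0 : 0 ≤ t)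
    (ht : 2 * t * (1 - ρ) ≤ 1 / 2) (x : Euc d) :
    ∫⁻ y in {y | (x, y) ∈ pcnOffShell ρ ε R d}, ENNReal.ofReal (pcnPropDen ρ d x y)
      ≤ 2 * ENNReal.ofReal (rexp (-(t * ε * d) + 4 * (1 - ρ) * (1 - ρ + ρ * R) * t ^ 2 * d)) := by
  by_cases hx : ‖x‖ ^ 2 ≤ R * d
  swap
  · simp [pcnOffShell, hx]
  set μ := ρ * ‖x‖ ^ 2 + (1 - ρ) * d
  set g : ℝ → Euc d → ℝ≥0∞ := fun s y =>
    ENNReal.ofReal (rexp (s * (‖y‖ ^ 2 - μ)) * pcnPropDen ρ d x y)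
  have hg : ∀ s, Measurable (g s) := fun s => by
    have := continuous_pcnPropDen (ρ := ρ) (d := d)
    simp only [g]
    fun_prop
  -- Chernoff's bound for both tails at once, via `e^{|s|} ≤ e^s + e^{-s}`.
  have hmarkov : ∀ y ∈ {y | (x, y) ∈ pcnOffShell ρ ε R d},
      ENNReal.ofReal (pcnPropDen ρ d x y)
        ≤ ENNReal.ofReal (rexp (-(t * ε * d))) * (g t y + g (-t) y) := by
    rintro y ⟨-, hy⟩
    have habs : rexp (t * ε * d) ≤ rexp (t * (‖y‖ ^ 2 - μ)) + rexp (-t * (‖y‖ ^ 2 - μ)) := by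
      calc rexp (t * ε * d) ≤ rexp |t * (‖y‖ ^ 2 - μ)| := by
            rw [abs_mul, abs_of_nonneg ht0, mul_assoc]
            exact exp_le_exp.mpr (mul_le_mul_of_nonneg_left hy ht0)
        _ ≤ _ := by rw [neg_mul]; exact exp_abs_le _
    have hφ := pcnPropDen_nonneg hρ.2 x y
    calc ENNReal.ofReal (pcnPropDen ρ d x y)
        ≤ ENNReal.ofReal (rexp (-(t * ε * d)) * (rexp (t * (‖y‖ ^ 2 - μ)) * pcnPropDen ρ d x y
            + rexp (-t * (‖y‖ ^ 2 - μ)) * pcnPropDen ρ d x y)) := by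
          refine ENNReal.ofReal_le_ofReal ?_
          rw [← add_mul, ← mul_assoc]
          refine le_mul_of_one_le_left hφ ?_
          rw [← div_le_iff₀' (exp_pos _), exp_neg, div_inv_eq_mul, one_mul]
          exact habs
      _ = _ := by
          rw [ENNReal.ofReal_mul (exp_pos _).le, ENNReal.ofReal_add (by positivity) (by positivity)]
  have hmgf : ∀ s, 2 * s * (1 - ρ) ≤ 1 / 2 → ∫⁻ y, g s y
      ≤ ENNReal.ofReal (rexp (4 * (1 - ρ) * (1 - ρ + ρ * R) * s ^ 2 * d)) :=
    fun s hs => lintegral_exp_mul_sub_mean_mul_pcnPropDen_le hρ hs hx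
  calc _ ≤ ∫⁻ y in {y | (x, y) ∈ pcnOffShell ρ ε R d},
        ENNReal.ofReal (rexp (-(t * ε * d))) * (g t y + g (-t) y) :=
        setLIntegral_mono' (measurable_prodMk_left measurableSet_pcnOffShell) hmarkov
    _ ≤ ENNReal.ofReal (rexp (-(t * ε * d))) * ((∫⁻ y, g t y) + ∫⁻ y, g (-t) y) := by
        rw [← lintegral_add_left (hg t), ← lintegral_const_mul' _ _ ENNReal.ofReal_ne_top]
        exact setLIntegral_le_lintegral _ _
    _ ≤ ENNReal.ofReal (rexp (-(t * ε * d))) *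
        (2 * ENNReal.ofReal (rexp (4 * (1 - ρ) * (1 - ρ + ρ * R) * t ^ 2 * d))) := by
        rw [two_mul]
        gcongr
        · exact hmgf t ht
        · simpa using hmgf (-t) (by nlinarith [hρ.2])
    _ = _ := by
        rw [mul_left_comm, ← ENNReal.ofReal_mul (exp_pos _).le, ← exp_add]

end OffShell

lemma exists_pos_forall_setLIntegral_pcnOffShell_le {ρ ε R : ℝ} (hρ : ρ ∈ Set.Ico 0 1)
    (hε : 0 < ε) (hR : 0 ≤ R) :
    ∃ c > 0, ∀ (d : ℕ) (x : Euc d),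
      ∫⁻ y in {y | (x, y) ∈ pcnOffShell ρ ε R d}, ENNReal.ofReal (pcnPropDen ρ d x y)
        ≤ 2 * ENNReal.ofReal (rexp (-(c * d))) := by
  obtain ⟨hρ0, hρ1⟩ := hρ
  have hρ1' : 0 < 1 - ρ := by linarith
  set C := 4 * (1 - ρ) * (1 - ρ + ρ * R)
  have hC : 0 < C := by positivity
  set t := min (ε / (2 * C)) (1 / (4 * (1 - ρ)))
  have ht0 : 0 < t := lt_min (by positivity) (by positivity)
  have htC : C * t ≤ ε / 2 := by
    have := min_le_left (ε / (2 * C)) (1 / (4 * (1 - ρ)))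
    rw [le_div_iff₀ (by positivity)] at this
    linarith
  have htρ : 2 * t * (1 - ρ) ≤ 1 / 2 := by
    have := min_le_right (ε / (2 * C)) (1 / (4 * (1 - ρ)))
    rw [le_div_iff₀ (by positivity)] at this
    linarith
  refine ⟨t * ε / 2, by positivity, fun d x => ?_⟩
  refine (setLIntegral_pcnOffShell_le ⟨hρ0, hρ1⟩ ht0.le htρ x).trans ?_
  gcongr
  have hd : (0 : ℝ) ≤ d := d.cast_nonneg
  nlinarith [mul_le_mul_of_nonneg_right htC (mul_nonneg ht0.le hd)]

lemma mem_pcnOffShell_or_swap_mem {ρ ε δ M R : ℝ} (hρ : ρ ∈ Set.Icc 0 1)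
    (hεδ : ε ≤ (1 - ρ) * δ) (hMR : M ≤ R) (hR : ρ * M + (1 - ρ) + ε ≤ R) {d : ℕ} {x : Euc d}
    (hxM : ‖x‖ ^ 2 ≤ M * d) (hxδ : δ * d ≤ |‖x‖ ^ 2 - d|) (y : Euc d) :
    (x, y) ∈ pcnOffShell ρ ε R d ∨ (y, x) ∈ pcnOffShell ρ ε R d := by
  obtain ⟨hρ0, hρ1⟩ := hρ
  have hd : (0 : ℝ) ≤ d := d.cast_nonneg
  by_cases hxy : ε * d ≤ |‖y‖ ^ 2 - (ρ * ‖x‖ ^ 2 + (1 - ρ) * d)|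
  · exact Or.inl ⟨hxM.trans (mul_le_mul_of_nonneg_right hMR hd), hxy⟩
  right
  rw [not_le] at hxy
  obtain ⟨hlo, hhi⟩ := abs_lt.mp hxy
  refine ⟨by nlinarith [mul_le_mul_of_nonneg_left hxM hρ0], ?_⟩
  have hid : ‖x‖ ^ 2 - (ρ * ‖y‖ ^ 2 + (1 - ρ) * d)
      = (1 - ρ ^ 2) * (‖x‖ ^ 2 - d) - ρ * (‖y‖ ^ 2 - (ρ * ‖x‖ ^ 2 + (1 - ρ) * d)) := by ring
  have htri := abs_sub_abs_le_abs_sub ((1 - ρ ^ 2) * (‖x‖ ^ 2 - d))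
    (ρ * (‖y‖ ^ 2 - (ρ * ‖x‖ ^ 2 + (1 - ρ) * d)))
  rw [← hid, abs_mul, abs_mul, abs_of_nonneg (by nlinarith : 0 ≤ 1 - ρ ^ 2),
    abs_of_nonneg hρ0] at htri
  nlinarith [mul_le_mul_of_nonneg_left hxδ (by nlinarith : 0 ≤ 1 - ρ ^ 2),
    mul_le_mul_of_nonneg_left hxy.le hρ0,
    mul_le_mul_of_nonneg_right hεδ (by positivity : (0 : ℝ) ≤ (1 + ρ) * d)]

section Kernel

variable {ρ : ℝ} {d : ℕ}

lemma exp_neg_sq_norm_mul_pcnPropDen_comm (hρ0 : 0 ≤ ρ) (hρ1 : ρ ≠ 1) (x y : Euc d) :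
    rexp (-‖x‖ ^ 2 / 2) * pcnPropDen ρ d x y = rexp (-‖y‖ ^ 2 / 2) * pcnPropDen ρ d y x := by
  have h1ρ : 1 - ρ ≠ 0 := sub_ne_zero.mpr hρ1.symm
  have hsq : ∀ a b : Euc d, ‖a - √ρ • b‖ ^ 2 = ‖a‖ ^ 2 - 2 * (√ρ * ⟪a, b⟫) + ρ * ‖b‖ ^ 2 := by
    intro a b
    rw [norm_sub_sq_real, real_inner_smul_right, norm_smul, Real.norm_of_nonneg (sqrt_nonneg ρ),
      mul_pow, sq_sqrt hρ0]
  unfold pcnPropDen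
  rw [mul_left_comm, ← exp_add, mul_left_comm (rexp _), ← exp_add, hsq, hsq, real_inner_comm x y]
  congr 2
  field_simp
  ring

lemma mul_pcnAccept_mul_pcnPropDen (hρ : ρ ∈ Set.Ico 0 1) {p : Euc d → ℝ} {x y : Euc d}
    (hpx : 0 ≤ p x) (hpy : 0 ≤ p y) :
    p x * (pcnAccept d p x y * pcnPropDen ρ d x y)
      = min (p x * pcnPropDen ρ d x y) (p y * pcnPropDen ρ d y x) := by
  rcases hpx.eq_or_lt with hpx0 | hpx0
  · simp [← hpx0, mul_nonneg hpy (pcnPropDen_nonneg hρ.2 y x)]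
  have hratio : p x * ((p y * rexp (-‖x‖ ^ 2 / 2)) / (p x * rexp (-‖y‖ ^ 2 / 2)))
      * pcnPropDen ρ d x y = p y * pcnPropDen ρ d y x := by
    rw [← mul_right_inj' (exp_pos (-‖y‖ ^ 2 / 2)).ne', ← mul_assoc (rexp _) (p y),
      mul_comm (rexp _) (p y), mul_assoc (p y), ← exp_neg_sq_norm_mul_pcnPropDen_comm hρ.1 hρ.2.ne]
    field_simp
  rw [pcnAccept, ← hratio, ← mul_assoc, mul_min_of_nonneg _ _ hpx0.le,
    min_mul_of_nonneg _ _ (pcnPropDen_nonneg hρ.2 x y), mul_one]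

lemma pcnKernel_compl_singleton_le (p : Euc d → ℝ) (x : Euc d) :
    pcnKernel ρ d p x {x}ᶜ ≤ ∫⁻ y, ENNReal.ofReal (pcnAccept d p x y * pcnPropDen ρ d x y) := by
  rw [pcnKernel, Measure.add_apply, Measure.smul_apply,
    Measure.dirac_apply' _ (measurableSet_singleton x).compl,
    Set.indicator_of_notMem (by simp), smul_zero, add_zero,
    withDensity_apply _ (measurableSet_singleton x).compl]
  exact setLIntegral_le_lintegral _ _

lemma setLIntegral_pcnKernel_compl_singleton_le (hρ : ρ ∈ Set.Ico 0 1) {p : Euc d → ℝ}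
    (hp : Measurable p) (hp0 : ∀ x, 0 ≤ p x) {A : Set (Euc d)} (hA : MeasurableSet A) :
    ∫⁻ x in A, pcnKernel ρ d p x {x}ᶜ ∂(volume.withDensity fun x => ENNReal.ofReal (p x))
      ≤ ∫⁻ x in A, ∫⁻ y, min (ENNReal.ofReal (p x * pcnPropDen ρ d x y))
          (ENNReal.ofReal (p y * pcnPropDen ρ d y x)) := by
  rw [restrict_withDensity hA, lintegral_withDensity_eq_lintegral_mul_non_measurable _
    hp.ennreal_ofReal (ae_of_all _ fun _ => ENNReal.ofReal_lt_top)]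
  refine lintegral_mono fun x => ?_
  refine (mul_le_mul_right (pcnKernel_compl_singleton_le p x) _).trans_eq ?_
  rw [← lintegral_const_mul' _ _ ENNReal.ofReal_ne_top]
  congr 1 with y
  rw [← ENNReal.ofReal_mul (hp0 x), mul_pcnAccept_mul_pcnPropDen hρ (hp0 x) (hp0 y),
    ENNReal.ofReal_min]

end Kernel

lemma setLIntegral_pcnKernel_compl_singleton_le_two_mul {ρ : ℝ} {d : ℕ} (hρ : ρ ∈ Set.Ico 0 1)
    {p : Euc d → ℝ} (hp : Measurable p) (hp0 : ∀ x, 0 ≤ p x)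
    (hp1 : ∫⁻ x, ENNReal.ofReal (p x) ≤ 1) {S : Set (Euc d × Euc d)} (hS : MeasurableSet S)
    {A : Set (Euc d)} (hA : MeasurableSet A) (hcover : ∀ x ∈ A, ∀ y, (x, y) ∈ S ∨ (y, x) ∈ S)
    {b : ℝ≥0∞} (hb : ∀ x, ∫⁻ y in {y | (x, y) ∈ S}, ENNReal.ofReal (pcnPropDen ρ d x y) ≤ b) :
    ∫⁻ x in A, pcnKernel ρ d p x {x}ᶜ ∂(volume.withDensity fun x => ENNReal.ofReal (p x))
      ≤ 2 * b := by
  have hflow :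
      Measurable fun q : Euc d × Euc d => ENNReal.ofReal (p q.1 * pcnPropDen ρ d q.1 q.2) :=
    ((hp.comp measurable_fst).mul continuous_pcnPropDen.measurable).ennreal_ofReal
  refine (setLIntegral_pcnKernel_compl_singleton_le hρ hp hp0 hA).trans <|
    (setLIntegral_lintegral_min_le_two_mul hflow hS hA hcover).trans ?_
  gcongr
  calc ∫⁻ x, ∫⁻ y in {y | (x, y) ∈ S}, ENNReal.ofReal (p x * pcnPropDen ρ d x y)
      = ∫⁻ x, ENNReal.ofReal (p x) *
          ∫⁻ y in {y | (x, y) ∈ S}, ENNReal.ofReal (pcnPropDen ρ d x y) := by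
        simp_rw [ENNReal.ofReal_mul (hp0 _), lintegral_const_mul' _ _ ENNReal.ofReal_ne_top]
    _ ≤ ∫⁻ x, ENNReal.ofReal (p x) * b := lintegral_mono fun x => by gcongr; exact hb x
    _ ≤ b := by
        rw [lintegral_mul_const _ hp.ennreal_ofReal]
        exact mul_le_of_le_one_left' hp1

lemma tendsto_natCast_pow_mul_ofReal_exp_neg_mul {c : ℝ} (hc : 0 < c) (n : ℕ) :
    Tendsto (fun d : ℕ => (d : ℝ≥0∞) ^ n * ENNReal.ofReal (rexp (-(c * d)))) atTop (𝓝 0) := by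
  have h := (tendsto_rpow_mul_exp_neg_mul_atTop_nhds_zero n c hc).comp
    tendsto_natCast_atTop_atTop
  rw [← ENNReal.ofReal_zero]
  refine (ENNReal.tendsto_ofReal h).congr fun d => ?_
  simp only [Function.comp_apply, Real.rpow_natCast, neg_mul]
  rw [ENNReal.ofReal_mul (by positivity), ENNReal.ofReal_pow d.cast_nonneg, ENNReal.ofReal_natCast]

lemma setLIntegral_pcnKernel_mixDensity_le_two_mul {ρ : ℝ} (hρ : ρ ∈ Set.Ico 0 1)
    (Q : Measure ℝ) [IsProbabilityMeasure Q] {K : Set ℝ} (hK : MeasurableSet K)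
    {M δ ε R : ℝ} (hMK : ∀ u ∈ K, u ≤ M) (hδK : ∀ u ∈ K, δ ≤ |u - 1|) (hεδ : ε ≤ (1 - ρ) * δ)
    (hMR : M ≤ R) (hR : ρ * M + (1 - ρ) + ε ≤ R) {d : ℕ} (hd : 0 < d) {b : ℝ≥0∞}
    (htail : ∀ x : Euc d,
      ∫⁻ y in {y | (x, y) ∈ pcnOffShell ρ ε R d}, ENNReal.ofReal (pcnPropDen ρ d x y) ≤ b) :
    ∫⁻ x in {x : Euc d | ‖x‖ ^ 2 / (d : ℝ) ∈ K}, pcnKernel ρ d (mixDensity Q d) x {x}ᶜ ∂(PdQ Q d)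
      ≤ 2 * b := by
  have hd' : (0 : ℝ) < d := Nat.cast_pos.mpr hd
  refine setLIntegral_pcnKernel_compl_singleton_le_two_mul hρ (measurable_mixDensity Q)
    (mixDensity_nonneg Q) (lintegral_ofReal_mixDensity_le_one Q) measurableSet_pcnOffShell
    (measurableSet_preimage (by fun_prop) hK) (fun x hx y => ?_) htail
  have hxM : ‖x‖ ^ 2 ≤ M * d := (div_le_iff₀ hd').mp (hMK _ hx)
  have hxδ : δ * d ≤ |‖x‖ ^ 2 - d| := by
    have := hδK _ hx
    rwa [show ‖x‖ ^ 2 / d - 1 = (‖x‖ ^ 2 - d) / d by field_simp, abs_div, abs_of_pos hd',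
      le_div_iff₀ hd'] at this
  exact mem_pcnOffShell_or_swap_mem ⟨hρ.1, hρ.2.le⟩ hεδ hMR hR hxM hxδ y

theorem pcn_move_prob_superpolynomially_small_general (ρ : ℝ) (hρ : ρ ∈ Set.Ioo (0 : ℝ) 1)
    (Q : Measure ℝ) [IsProbabilityMeasure Q]
    (p : ℕ) (K : Set ℝ) (hK : IsCompact K) (hKsub : K ⊆ Set.Ioi 0 \ {1}) :
    Tendsto (fun d : ℕ =>
        ((d : ℝ≥0∞)) ^ p *
          ∫⁻ x in {x : Euc d | ‖x‖ ^ 2 / (d : ℝ) ∈ K},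
            pcnKernel ρ d (mixDensity Q d) x {x}ᶜ ∂(PdQ Q d))
      atTop (𝓝 0) := by
  obtain ⟨M, hM, hMK⟩ := hK.isBounded.exists_pos_norm_le
  obtain ⟨δ, hδ, hball⟩ := Metric.isOpen_iff.mp hK.isClosed.isOpen_compl 1 fun h => (hKsub h).2 rfl
  have hδK : ∀ u ∈ K, δ ≤ |u - 1| := fun u hu =>
    not_lt.mp fun h => hball (by rwa [Metric.mem_ball, Real.dist_eq]) hu
  have hρ' : ρ ∈ Set.Ico 0 1 := Set.Ioo_subset_Ico_self hρ
  obtain ⟨c, hc, htail⟩ := exists_pos_forall_setLIntegral_pcnOffShell_le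
    (ε := (1 - ρ) * δ) (R := M + 1 + (1 - ρ) * δ) hρ' (mul_pos (by linarith [hρ.2]) hδ)
    (by nlinarith [hρ.2])
  have hlim := ENNReal.Tendsto.const_mul (a := 4)
    (tendsto_natCast_pow_mul_ofReal_exp_neg_mul hc p) (Or.inr ENNReal.ofNat_ne_top)
  rw [mul_zero] at hlim
  refine tendsto_of_tendsto_of_tendsto_of_le_of_le' tendsto_const_nhds hlim
    (Eventually.of_forall fun _ => zero_le) ?_
  filter_upwards [eventually_gt_atTop 0] with d hd
  calc _ ≤ (d : ℝ≥0∞) ^ p * (4 * ENNReal.ofReal (rexp (-(c * d)))) := by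
        gcongr
        refine (setLIntegral_pcnKernel_mixDensity_le_two_mul hρ' Q hK.measurableSet
          (fun u hu => (le_abs_self u).trans (hMK u hu)) hδK le_rfl (by nlinarith [hρ.2])
          (by nlinarith [hρ.1, hρ.2]) hd (htail d)).trans_eq ?_
        rw [← mul_assoc]
        norm_num
    _ = 4 * ((d : ℝ≥0∞) ^ p * ENNReal.ofReal (rexp (-(c * d)))) := by ring

/-- For the scale-mixture target `P_d = P_d(Q)` and the pCN kernel
`K_d`, for every `p ∈ ℕ` and every compact `K ⊂ (0,∞) ∖ {1}`,
`d^p ∫ 1{‖x‖²/d ∈ K} K_d(x, ℝ^d ∖ {x}) P_d(dx) → 0` as `d → ∞`. -/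
theorem pcn_move_prob_superpolynomially_small (ρ : ℝ) (hρ : ρ ∈ Set.Ioo (0 : ℝ) 1)
    (Q : Measure ℝ) [IsProbabilityMeasure Q] (hQsupp : Q (Set.Iic 0) = 0)
    (p : ℕ) (K : Set ℝ) (hK : IsCompact K) (hKsub : K ⊆ Set.Ioi 0 \ {1}) :
    Tendsto (fun d : ℕ =>
        ((d : ℝ≥0∞)) ^ p *
          ∫⁻ x in {x : Euc d | ‖x‖ ^ 2 / (d : ℝ) ∈ K},
            pcnKernel ρ d (mixDensity Q d) x {x}ᶜ ∂(PdQ Q d))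
      atTop (𝓝 0) :=
  pcn_move_prob_superpolynomially_small_general ρ hρ Q p K hK hKsub
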